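/- In the poset (P, ≤) of conditions (defined from a subgroup G ≤ ℚ^m containing ℤ^m and an abelian group H), for every n ∈ ℕ the set A_n = {q ∈ P : n ≤ n^q} is dense and downward-closed, and for every finite set π of primes the set B_π = {q ∈ P : π ⊆ π^q} is dense. -/

import Mathlib

open Pointwise

/-- Rationals whose reduced denominator has all prime divisors in the finite set `π`. -/
def QpiSet (π : Finset ℕ) : Set ℚ := {q : ℚ | ∀ p : ℕ, p.Prime → p ∣ q.den → p ∈ π}

/-- The subset `Q_π^m` of `ℚ^m`. -/
def QpiVec (m : ℕ) (π : Finset ℕ) : Set (Fin m → ℚ) := {v | ∀ i, v i ∈ QpiSet π}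

/-- The subset `(sℤ)^m` of `ℚ^m`. -/
def intVec (m : ℕ) (s : ℤ) : Set (Fin m → ℚ) := {v | ∀ i, ∃ z : ℤ, v i = (s : ℚ) * z}

/-- The copy of `(sℤ)^m` inside `ℚ^m ⊕ H`. -/
def intVecH (m : ℕ) (H : Type*) [AddCommGroup H] (s : ℤ) : Set ((Fin m → ℚ) × H) :=
  {x | x.1 ∈ intVec m s ∧ x.2 = 0}

/-- The poset `ℙ` of conditions, built from a subgroup `G ≤ ℚ^m` and an abelian
group `H`; we work inside `ℚ^m ⊕ H`, represented as the product `(Fin m → ℚ) × H`. -/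
structure Cond (m : ℕ) (G : AddSubgroup (Fin m → ℚ)) (H : Type*) [AddCommGroup H] where
  π : Finset ℕ
  primes : ∀ p ∈ π, Nat.Prime p
  n : ℕ
  U : ℕ → Set ((Fin m → ℚ) × H)
  s : ℕ → ℕ
  s_pos : ∀ i ≤ n, 0 < s i
  zero_mem : ∀ i ≤ n, (0 : (Fin m → ℚ) × H) ∈ U i
  mem_sub : ∀ i ≤ n, U i ⊆ {x | x.1 ∈ G ∧ x.1 ∈ QpiVec m π}
  symm : ∀ i ≤ n, -U i = U i
  translate : ∀ i ≤ n, U i + intVecH m H (s i) = U i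
  add_sub : ∀ i, i + 1 ≤ n → U (i + 1) + U (i + 1) ⊆ U i
  s_dvd : ∀ i, i + 1 ≤ n → s i ∣ s (i + 1)

/-- The order on the poset `ℙ` of conditions: `q ≤ p` iff `π^p ⊆ π^q`, `n^p ≤ n^q`,
`U_i^q ∩ (Q_{π^p}^m + H) = U_i^p` and `s_i^q = s_i^p` for all `i ≤ n^p`. -/
def Cond.le {m : ℕ} {G : AddSubgroup (Fin m → ℚ)} {H : Type*} [AddCommGroup H]
    (q p : Cond m G H) : Prop :=
  p.π ⊆ q.π ∧ p.n ≤ q.n ∧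
    (∀ i ≤ p.n, q.U i ∩ {x | x.1 ∈ QpiVec m p.π} = p.U i) ∧
    ∀ i ≤ p.n, q.s i = p.s i

/-!
A condition is lengthened by appending the lattice `(s_{n^p} ℤ)^m × {0}` as every new level:
it is a group, lies in `G ∩ Q_π^m` because `ℤ^m ⊆ G`, and is contained in `U_{n^p}^p` by the
translation property, so the doubling condition `U_{i+1} + U_{i+1} ⊆ U_i` survives. Enlarging
`π^p` changes nothing else, since every `U_i^p` already lies in `Q_{π^p}^m + H`.
-/

def intVecHSubgroup (m : ℕ) (H : Type*) [AddCommGroup H] (s : ℤ) :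
    AddSubgroup ((Fin m → ℚ) × H) where
  carrier := intVecH m H s
  zero_mem' := ⟨fun _ => ⟨0, by simp⟩, rfl⟩
  add_mem' := by
    rintro x y ⟨hx, hx0⟩ ⟨hy, hy0⟩
    refine ⟨fun i => ?_, by simp [hx0, hy0]⟩
    obtain ⟨a, ha⟩ := hx i
    obtain ⟨b, hb⟩ := hy i
    exact ⟨a + b, by simp [ha, hb, mul_add]⟩
  neg_mem' := by
    rintro x ⟨hx, hx0⟩
    refine ⟨fun i => ?_, by simp [hx0]⟩
    obtain ⟨a, ha⟩ := hx i
    exact ⟨-a, by simp [ha]⟩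

section intVecH

variable {m : ℕ} {H : Type*} [AddCommGroup H] {s : ℤ}

theorem zero_mem_intVecH : (0 : (Fin m → ℚ) × H) ∈ intVecH m H s :=
  (intVecHSubgroup m H s).zero_mem

theorem neg_intVecH : -intVecH m H s = intVecH m H s :=
  neg_coe_set (H := intVecHSubgroup m H s)

theorem intVecH_add_intVecH : intVecH m H s + intVecH m H s = intVecH m H s :=
  (intVecHSubgroup m H s).toAddSubmonoid.coe_add_self_eq

theorem intVecH_subset_of_add_eq {A : Set ((Fin m → ℚ) × H)} (h0 : 0 ∈ A)
    (hA : A + intVecH m H s = A) : intVecH m H s ⊆ A := fun x hx =>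
  hA ▸ ⟨0, h0, x, hx, zero_add x⟩

theorem intVec_subset_QpiVec (π : Finset ℕ) : intVec m s ⊆ QpiVec m π := by
  intro v hv i p hp hdvd
  obtain ⟨z, hz⟩ := hv i
  rw [hz, ← Int.cast_mul, Rat.den_intCast, Nat.dvd_one] at hdvd
  exact absurd hdvd hp.ne_one

theorem intVec_subset_of_forall_int {G : AddSubgroup (Fin m → ℚ)}
    (hZ : ∀ v : Fin m → ℚ, (∀ i, ∃ z : ℤ, v i = (z : ℚ)) → v ∈ G) :
    intVec m s ⊆ G := fun v hv =>
  hZ v fun i => let ⟨z, hz⟩ := hv i; ⟨s * z, by rw [hz, Int.cast_mul]⟩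

end intVecH

theorem QpiVec_mono (m : ℕ) {π₁ π₂ : Finset ℕ} (h : π₁ ⊆ π₂) :
    QpiVec m π₁ ⊆ QpiVec m π₂ := fun _ hv i p hp hd => h (hv i p hp hd)

namespace Cond

variable {m : ℕ} {G : AddSubgroup (Fin m → ℚ)} {H : Type*} [AddCommGroup H]

theorem U_inter_QpiVec (p : Cond m G H) {i : ℕ} (hi : i ≤ p.n) :
    p.U i ∩ {x | x.1 ∈ QpiVec m p.π} = p.U i :=
  Set.inter_eq_left.mpr fun _ hx => (p.mem_sub i hi hx).2

def prolong (hZ : ∀ v : Fin m → ℚ, (∀ i, ∃ z : ℤ, v i = (z : ℚ)) → v ∈ G)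
    (p : Cond m G H) (N : ℕ) : Cond m G H where
  π := p.π
  primes := p.primes
  n := max p.n N
  U i := if i ≤ p.n then p.U i else intVecH m H (p.s p.n)
  s i := p.s (min i p.n)
  s_pos _ _ := p.s_pos _ (min_le_right _ _)
  zero_mem i _ := by
    split_ifs with hi
    exacts [p.zero_mem i hi, zero_mem_intVecH]
  mem_sub i _ := by
    split_ifs with hi
    · exact p.mem_sub i hi
    · exact fun x hx => ⟨intVec_subset_of_forall_int hZ hx.1, intVec_subset_QpiVec _ hx.1⟩
  symm i _ := by
    split_ifs with hi
    exacts [p.symm i hi, neg_intVecH]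
  translate i _ := by
    split_ifs with hi
    · rw [min_eq_left hi]
      exact p.translate i hi
    · rw [min_eq_right (by omega)]
      exact intVecH_add_intVecH
  add_sub i _ := by
    by_cases hi : i + 1 ≤ p.n
    · simpa [hi, Nat.le_of_succ_le hi] using p.add_sub i hi
    · rw [if_neg hi, intVecH_add_intVecH]
      split_ifs with hi'
      · obtain rfl : i = p.n := by omega
        exact intVecH_subset_of_add_eq (p.zero_mem _ le_rfl) (p.translate _ le_rfl)
      · exact subset_rfl
  s_dvd i _ := by
    by_cases hi : i + 1 ≤ p.n
    · simpa [min_eq_left hi, min_eq_left (Nat.le_of_succ_le hi)] using p.s_dvd i hi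
    · rw [min_eq_right (by omega : p.n ≤ i + 1), min_eq_right (by omega : p.n ≤ i)]

theorem prolong_le (hZ : ∀ v : Fin m → ℚ, (∀ i, ∃ z : ℤ, v i = (z : ℚ)) → v ∈ G)
    (p : Cond m G H) (N : ℕ) : (p.prolong hZ N).le p :=
  ⟨subset_rfl, le_max_left _ _, fun i hi => by simpa [prolong, hi] using p.U_inter_QpiVec hi,
    fun i hi => by simp [prolong, hi]⟩

theorem le_n_prolong (hZ : ∀ v : Fin m → ℚ, (∀ i, ∃ z : ℤ, v i = (z : ℚ)) → v ∈ G)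
    (p : Cond m G H) (N : ℕ) : N ≤ (p.prolong hZ N).n :=
  le_max_right _ _

def addPrimes (p : Cond m G H) (π : Finset ℕ) (hπ : ∀ q ∈ π, q.Prime) : Cond m G H where
  __ := p
  π := p.π ∪ π
  primes q hq := (Finset.mem_union.mp hq).elim (p.primes q) (hπ q)
  mem_sub i hi _ hx :=
    ⟨(p.mem_sub i hi hx).1, QpiVec_mono m Finset.subset_union_left (p.mem_sub i hi hx).2⟩

theorem addPrimes_le (p : Cond m G H) (π : Finset ℕ) (hπ : ∀ q ∈ π, q.Prime) :
    (p.addPrimes π hπ).le p :=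
  ⟨Finset.subset_union_left, le_rfl, fun _ hi => p.U_inter_QpiVec hi, fun _ _ => rfl⟩

end Cond

theorem stmt_17_general (m : ℕ) (G : AddSubgroup (Fin m → ℚ))
    (hZ : ∀ v : Fin m → ℚ, (∀ i, ∃ z : ℤ, v i = (z : ℚ)) → v ∈ G)
    (H : Type*) [AddCommGroup H] :
    (∀ n : ℕ,
      (∀ p : Cond m G H, ∃ q : Cond m G H, q.le p ∧ n ≤ q.n) ∧
      (∀ p q : Cond m G H, n ≤ p.n → q.le p → n ≤ q.n)) ∧
    ∀ π : Finset ℕ, (∀ pr ∈ π, Nat.Prime pr) →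
      ∀ p : Cond m G H, ∃ q : Cond m G H, q.le p ∧ π ⊆ q.π :=
  ⟨fun n => ⟨fun p => ⟨p.prolong hZ n, p.prolong_le hZ n, p.le_n_prolong hZ n⟩,
      fun _ _ hn hle => hn.trans hle.2.1⟩,
    fun π hπ p => ⟨p.addPrimes π hπ, p.addPrimes_le π hπ, Finset.subset_union_right⟩⟩

/-- Lemmas 8.3 and 8.4: the sets `A_n = {q ∈ ℙ : n ≤ n^q}` are dense and
downward-closed, and the sets `B_π = {q ∈ ℙ : π ⊆ π^q}` are dense. -/
theorem stmt_17 (m : ℕ) (hm : 0 < m) (G : AddSubgroup (Fin m → ℚ))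
    (hZ : ∀ v : Fin m → ℚ, (∀ i, ∃ z : ℤ, v i = (z : ℚ)) → v ∈ G)
    (H : Type*) [AddCommGroup H] :
    (∀ n : ℕ,
      (∀ p : Cond m G H, ∃ q : Cond m G H, q.le p ∧ n ≤ q.n) ∧
      (∀ p q : Cond m G H, n ≤ p.n → q.le p → n ≤ q.n)) ∧
    ∀ π : Finset ℕ, (∀ pr ∈ π, Nat.Prime pr) →
      ∀ p : Cond m G H, ∃ q : Cond m G H, q.le p ∧ π ⊆ q.π :=
  stmt_17_general m G hZ H
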